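/- arXiv:1405.5641 — 6 statements merged into one kernel-verified Lean document; each statement's English description precedes it below -/
import Mathlib

section
/- Fix an integer N ≥ 2, reals θ_0, θ_1, …, θ_N > 0 and S_0, S_1, …, S_N ≥ 0, a convex function C : ℝ → ℝ, and functions Q_1, …, Q_N : ℝ → ℝ; for x ∈ ℝ^N let b(x) := S_0/θ_0 + Σ_{n=1}^N (S_n − x_n)/θ_n and Ψ(x) := C(b(0)) − C(b(x)) + Σ_{n=1}^N Q_n(x_n). Let D := Π_{n=1}^N [0, M_n] with all M_n ≥ 0, and let x* ∈ D maximize Ψ over D. Define Δ(1) := Ψ(x*) − Ψ(x*[N−1:=0]) and Δ(0) := Ψ(x*[N:=0]) − Ψ(x*[N−1:=0][N:=0]), where x[i:=t] denotes x with its i-th coordinate replaced by t. Then Δ(1) ≥ 0 and Δ(0) ≥ Δ(1); consequently the virtual marginal social welfare Δ̄ := (Δ(0) + Δ(1))/2 is nonnegative, and for every v with 0 ≤ v ≤ Δ̄ one has (Δ̄ − v)·v ≤ Δ̄²/4, with equality if and only if v = Δ̄/2. (NBS in Step N−1 of the sequential bargaining: APO N−1 receives half of the virtual marginal social welfare it generates.)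 -/
/-- The MNO's total resource consumption at offloading profile `x`. -/
noncomputable def resourceB {N : ℕ} (θ0 S0 : ℝ) (θ S : Fin N → ℝ)
    (x : Fin N → ℝ) : ℝ :=
  S0 / θ0 + ∑ n, (S n - x n) / θ n

/-- The social welfare of the data-offloading problem. -/
noncomputable def welfare {N : ℕ} (θ0 S0 : ℝ) (θ S : Fin N → ℝ) (C : ℝ → ℝ)
    (Q : Fin N → ℝ → ℝ) (x : Fin N → ℝ) : ℝ :=
  C (resourceB θ0 S0 θ S 0) - C (resourceB θ0 S0 θ S x) + ∑ n, Q n (x n)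


/-! Removing APO `N−1` raises the MNO's resource consumption by `p = x*_{N−1}/θ_{N−1}` and changes
the APO's profit by `G = Q_{N−1}(x*_{N−1}) − Q_{N−1}(0)`, so `Δ(1) = C(b + p) − C(b) + G`, where
`b = b(x*)`. If APO `N` has already been removed, consumption starts from `b + q` with
`q = x*_N/θ_N`, and `Δ(0) = C(b + q + p) − C(b + q) + G`. A convex function has increasing
differences, which is `Δ(1) ≤ Δ(0)`; optimality of `x*` gives `Δ(1) ≥ 0`; and the Nash product is
maximised at the midpoint by AM–GM. -/

open Function Set

theorem Fintype.sum_apply_update {ι α M : Type*} [Fintype ι] [DecidableEq ι] [AddCommGroup M]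
    (g : ι → α → M) (x : ι → α) (i : ι) (t : α) :
    ∑ n, g n (update x i t n) = ∑ n, g n (x n) + (g i t - g i (x i)) := by
  simp only [apply_update g x i t]
  rw [Finset.sum_update_of_mem (Finset.mem_univ i),
    Finset.sum_eq_add_sum_sdiff_singleton_of_mem (Finset.mem_univ i)]
  abel

/-- `a + p` and `a + q` are convex combinations of `a` and `a + p + q` with complementary
weights. -/
theorem ConvexOn.add_add_le_add_add {𝕜 : Type*} [Field 𝕜] [LinearOrder 𝕜] [IsStrictOrderedRing 𝕜]
    {s : Set 𝕜} {f : 𝕜 → 𝕜} (hf : ConvexOn 𝕜 s f) {a p q : 𝕜} (ha : a ∈ s)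
    (hb : a + p + q ∈ s) (hp : 0 ≤ p) (hq : 0 ≤ q) :
    f (a + p) + f (a + q) ≤ f a + f (a + p + q) := by
  rcases (add_nonneg hp hq).eq_or_lt with hpq | hpq
  · obtain rfl : p = 0 := by linarith
    obtain rfl : q = 0 := by linarith
    simp
  have hsum : q / (p + q) + p / (p + q) = 1 := by field_simp; ring
  have hp' := hf.2 ha hb (by positivity) (by positivity) hsum
  have hq' := hf.2 ha hb (by positivity) (by positivity) ((add_comm _ _).trans hsum)
  simp only [smul_eq_mul] at hp' hq'
  have hp_eq : q / (p + q) * a + p / (p + q) * (a + p + q) = a + p := by field_simp; ring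
  have hq_eq : p / (p + q) * a + q / (p + q) * (a + p + q) = a + q := by field_simp; ring
  rw [hp_eq] at hp'
  rw [hq_eq] at hq'
  linear_combination hp' + hq' + (f a + f (a + p + q)) * hsum

section NashProduct

variable {R : Type*} [Field R] [LinearOrder R] [IsStrictOrderedRing R]

theorem sub_mul_le_sq_div_four (D v : R) : (D - v) * v ≤ D ^ 2 / 4 := by
  linarith [four_mul_le_sq_add (D - v) v, sub_add_cancel D v]

theorem sub_mul_eq_sq_div_four_iff (D v : R) : (D - v) * v = D ^ 2 / 4 ↔ v = D / 2 := by
  constructor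
  · intro h
    have : (D / 2 - v) ^ 2 = 0 := by linear_combination -h
    linear_combination -(pow_eq_zero_iff two_ne_zero).1 this
  · rintro rfl
    ring

end NashProduct

section Welfare

variable {N : ℕ} (θ0 S0 : ℝ) (θ S : Fin N → ℝ) (C : ℝ → ℝ) (Q : Fin N → ℝ → ℝ)

theorem resourceB_update (x : Fin N → ℝ) (i : Fin N) (t : ℝ) :
    resourceB θ0 S0 θ S (update x i t) = resourceB θ0 S0 θ S x + (x i - t) / θ i := by
  simp only [resourceB, Fintype.sum_apply_update (fun n y => (S n - y) / θ n)]
  ring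

theorem welfare_sub_welfare_update (x : Fin N → ℝ) (i : Fin N) (t : ℝ) :
    welfare θ0 S0 θ S C Q x - welfare θ0 S0 θ S C Q (update x i t) =
      C (resourceB θ0 S0 θ S x + (x i - t) / θ i) - C (resourceB θ0 S0 θ S x) +
        (Q i (x i) - Q i t) := by
  simp only [welfare, resourceB_update, Fintype.sum_apply_update Q]
  ring

end Welfare

theorem update_zero_mem_Icc {ι : Type*} [DecidableEq ι] {M x : ι → ℝ}
    (hx : ∀ n, x n ∈ Icc 0 (M n)) (i : ι) : ∀ n, update x i 0 n ∈ Icc 0 (M n) := by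
  intro n
  rcases eq_or_ne n i with rfl | hn
  · simpa using (hx n).1.trans (hx n).2
  · simpa [hn] using hx n

/-- NBS in Step `N−1` of the sequential bargaining: `Δ(1) ≥ 0`, `Δ(0) ≥ Δ(1)`,
the virtual marginal social welfare `Δ̄ = (Δ(0)+Δ(1))/2` is nonnegative, and the
Nash product `(Δ̄ − v)·v` is at most `Δ̄²/4` with equality iff `v = Δ̄/2`:
APO `N−1` receives half of the virtual marginal social welfare it generates. -/
theorem NBS_step_N_minus_one {N : ℕ} (hN : 2 ≤ N)
    (θ0 : ℝ) (θ : Fin N → ℝ) (hθ : ∀ n, 0 < θ n)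
    (S0 : ℝ) (S : Fin N → ℝ)
    (C : ℝ → ℝ) (hC : ConvexOn ℝ Set.univ C)
    (Q : Fin N → ℝ → ℝ)
    (M : Fin N → ℝ)
    (xs : Fin N → ℝ) (hmem : ∀ n, xs n ∈ Set.Icc 0 (M n))
    (hmax : ∀ y : Fin N → ℝ, (∀ n, y n ∈ Set.Icc 0 (M n)) →
      welfare θ0 S0 θ S C Q y ≤ welfare θ0 S0 θ S C Q xs) :
    let nprev : Fin N := ⟨N - 2, by omega⟩
    let nlast : Fin N := ⟨N - 1, by omega⟩
    let Δ1 := welfare θ0 S0 θ S C Q xs -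
      welfare θ0 S0 θ S C Q (Function.update xs nprev 0)
    let Δ0 := welfare θ0 S0 θ S C Q (Function.update xs nlast 0) -
      welfare θ0 S0 θ S C Q (Function.update (Function.update xs nprev 0) nlast 0)
    0 ≤ Δ1 ∧ Δ1 ≤ Δ0 ∧ 0 ≤ (Δ0 + Δ1) / 2 ∧
    ∀ v : ℝ, 0 ≤ v → v ≤ (Δ0 + Δ1) / 2 →
      (((Δ0 + Δ1) / 2 - v) * v ≤ ((Δ0 + Δ1) / 2) ^ 2 / 4 ∧
       (((Δ0 + Δ1) / 2 - v) * v = ((Δ0 + Δ1) / 2) ^ 2 / 4 ↔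
         v = ((Δ0 + Δ1) / 2) / 2)) := by
  intro nprev nlast Δ1 Δ0
  have hne : nprev ≠ nlast := by simp [nprev, nlast, Fin.ext_iff]; omega
  have hΔ1_nonneg : 0 ≤ Δ1 := sub_nonneg.2 (hmax _ (update_zero_mem_Icc hmem nprev))
  have hΔ1 := welfare_sub_welfare_update θ0 S0 θ S C Q xs nprev 0
  have hΔ0 := welfare_sub_welfare_update θ0 S0 θ S C Q (update xs nlast 0) nprev 0
  rw [update_comm hne.symm, update_of_ne hne, resourceB_update, sub_zero] at hΔ0
  rw [sub_zero] at hΔ1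
  have hΔ1_le : Δ1 ≤ Δ0 := by
    have := hC.add_add_le_add_add (mem_univ (resourceB θ0 S0 θ S xs)) (mem_univ _)
      (div_nonneg (hmem nprev).1 (hθ nprev).le) (div_nonneg (hmem nlast).1 (hθ nlast).le)
    simp only [Δ1, Δ0, hΔ1, hΔ0, sub_zero, add_right_comm _ (xs nlast / θ nlast)]
    linarith
  exact ⟨hΔ1_nonneg, hΔ1_le, by linarith, fun v _ _ =>
    ⟨sub_mul_le_sq_div_four _ v, sub_mul_eq_sq_div_four_iff _ v⟩⟩
end

section
/- For an integer N ≥ 1 and a function g : {0,1}^N → ℝ, define for each n ∈ {1,…,N} the sequential bargaining payoff π_n(g) := 2^{-(N-n+1)} · Σ_{I ∈ {0,1}^{N-n}} ( g(1^{n-1}, 1, I) − g(1^{n-1}, 0, I) ), where (1^{n-1}, b, I) denotes the vector whose first n−1 coordinates equal 1, whose n-th coordinate equals b, and whose last N−n coordinates are given by I. Then g(1, 1, …, 1) − Σ_{n=1}^N π_n(g) = 2^{-N} · Σ_{I ∈ {0,1}^N} g(I). (The MNO's payoff under the sequential bargaining solution equals the average of the social welfare over all 2^N agreement/disagreement outcomes,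 each APO reaching agreement with probability 1/2.) -/
/-- The agreement vector `(1^{n-1}, b, I)` (in 1-indexed notation): the first
`n−1` coordinates equal `true`, the `n`-th coordinate equals `b`, and the last
`N−n` coordinates are given by `I`. -/
def extendVec {N : ℕ} (n : ℕ) (b : Bool) (I : Fin (N - n) → Bool) :
    Fin N → Bool :=
  fun i =>
    if i.val < n - 1 then true
    else if i.val = n - 1 then b
    else if h : i.val - n < N - n then I ⟨i.val - n, h⟩ else true

/-- APO `n`'s payoff in the sequential bargaining (1-indexed):
`π_n(g) = 2^{-(N-n+1)} · Σ_{I ∈ {0,1}^{N-n}} (g(1^{n-1},1,I) − g(1^{n-1},0,I))`. -/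
noncomputable def seqPayoff {N : ℕ} (g : (Fin N → Bool) → ℝ) (n : ℕ) : ℝ :=
  (∑ I : Fin (N - n) → Bool,
    (g (extendVec n true I) - g (extendVec n false I))) / 2 ^ (N - n + 1)

/-- vector with first `k` coordinates true, rest given by `I`. -/
def vecOnes {N : ℕ} (k : ℕ) (I : Fin (N - k) → Bool) : Fin N → Bool :=
  fun i => if h : i.val < k then true
    else I ⟨i.val - k, by have := i.isLt; omega⟩

noncomputable def avgF {N : ℕ} (g : (Fin N → Bool) → ℝ) (k : ℕ) : ℝ :=
  (∑ I : Fin (N - k) → Bool, g (vecOnes k I)) / 2 ^ (N - k)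

lemma vecOnes_phi {N k : ℕ} (hk : k < N) (b : Bool) (I : Fin (N - (k+1)) → Bool) :
    vecOnes k (fun j : Fin (N - k) => if hj : j.val = 0 then b
        else I ⟨j.val - 1, by have := j.isLt; omega⟩)
      = extendVec (k+1) b I := by
  funext i
  simp only [vecOnes, extendVec]
  rcases lt_trichotomy i.val k with h | h | h
  · simp [h, show i.val < k + 1 - 1 by omega]
  · have h1 : ¬ i.val < k := by omega
    have h2 : ¬ i.val < k + 1 - 1 := by omega
    have h3 : i.val - k = 0 := by omega
    have h4 : i.val = k + 1 - 1 := by omega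
    simp [h1, h2, h3, h4]
  · have h1 : ¬ i.val < k := by omega
    have h2 : ¬ i.val < k + 1 - 1 := by omega
    have h3 : ¬ i.val = k + 1 - 1 := by omega
    have h4 : ¬ i.val - k = 0 := by omega
    have h5 : i.val - (k+1) < N - (k+1) := by have := i.isLt; omega
    simp only [h1, h2, h3, h4, h5, dite_false, if_false, dite_true]
    exact congrArg I (Fin.ext (by simp; omega))

lemma sum_split {N k : ℕ} (hk : k < N) (g : (Fin N → Bool) → ℝ) :
    ∑ J : Fin (N - k) → Bool, g (vecOnes k J)
      = ∑ I : Fin (N - (k+1)) → Bool,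
          (g (extendVec (k+1) true I) + g (extendVec (k+1) false I)) := by
  have hpos : 0 < N - k := by omega
  set φ : Bool × (Fin (N - (k+1)) → Bool) → (Fin (N - k) → Bool) :=
    fun p j => if hj : j.val = 0 then p.1
      else p.2 ⟨j.val - 1, by have := j.isLt; omega⟩ with hφ
  have hbij : Function.Bijective φ := by
    rw [Function.bijective_iff_has_inverse]
    refine ⟨fun J => (J ⟨0, hpos⟩, fun i => J ⟨i.val + 1, by have := i.isLt; omega⟩),
      fun p => ?_, fun J => ?_⟩
    · ext i
      · simp [hφ]
      · simp only [hφ]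
        rw [dif_neg (by omega : ¬ (i.val + 1 = 0))]
        exact congrArg p.2 (Fin.ext (by simp))
    · funext j
      simp only [hφ]
      by_cases hj : j.val = 0
      · rw [dif_pos hj]; exact congrArg J (Fin.ext (by simp [hj]))
      · rw [dif_neg hj]; exact congrArg J (Fin.ext (by simp; omega))
  rw [← Fintype.sum_bijective φ hbij _ _ (fun p => rfl)]
  rw [Fintype.sum_prod_type, Fintype.sum_bool, ← Finset.sum_add_distrib]
  refine Finset.sum_congr rfl fun I _ => ?_
  rw [show vecOnes k (φ (true, I)) = extendVec (k+1) true I from vecOnes_phi hk true I,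
    show vecOnes k (φ (false, I)) = extendVec (k+1) false I from vecOnes_phi hk false I]

lemma extend_eq_vecOnes {N k : ℕ} (I : Fin (N - (k+1)) → Bool) :
    extendVec (k+1) true I = vecOnes (k+1) I := by
  funext i
  simp only [extendVec, vecOnes]
  rcases lt_trichotomy i.val k with h | h | h
  · simp [h, Nat.lt_of_lt_of_le h (Nat.le_succ k)]
  · simp [h]
  · have h1 : ¬ i.val < k := by omega
    have h2 : ¬ i.val = k := by omega
    have h3 : ¬ i.val < k + 1 := by omega
    have h4 : i.val - (k+1) < N - (k+1) := by have := i.isLt; omega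
    simp [h1, h2, h3, h4]

lemma avgF_step {N : ℕ} (g : (Fin N → Bool) → ℝ) {k : ℕ} (hk : k < N) :
    seqPayoff g (k+1) = avgF g (k+1) - avgF g k := by
  have hm : N - k = (N - (k+1)) + 1 := by omega
  simp only [seqPayoff, avgF, Finset.sum_sub_distrib]
  simp only [extend_eq_vecOnes]
  rw [sum_split hk g, Finset.sum_add_distrib]
  simp only [extend_eq_vecOnes]
  rw [show N - (k+1) + 1 = N - k by omega, hm, pow_succ]
  have h2 : (2:ℝ) ^ (N - (k+1)) ≠ 0 := by positivity
  field_simp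
  ring


/-- The MNO's payoff under the sequential bargaining solution,
`g(1,…,1) − Σ_{n=1}^N π_n(g)`, equals the average `2^{-N} Σ_{I ∈ {0,1}^N} g(I)`
of the social welfare over all agreement/disagreement outcomes. -/
theorem MNO_payoff_eq_average {N : ℕ} (hN : 1 ≤ N) (g : (Fin N → Bool) → ℝ) :
    g (fun _ => true) - ∑ n ∈ Finset.Icc 1 N, seqPayoff g n
      = (∑ I : Fin N → Bool, g I) / 2 ^ N := by
  have hIcc : ∑ n ∈ Finset.Icc 1 N, seqPayoff g n
      = ∑ i ∈ Finset.range N, (avgF g (i+1) - avgF g i) := by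
    rw [← Finset.Ico_add_one_right_eq_Icc, Finset.sum_Ico_eq_sum_range]
    refine Finset.sum_congr (by simp) fun i hi => ?_
    rw [Finset.mem_range] at hi
    rw [show 1 + i = i + 1 by omega, avgF_step g (by omega)]
  rw [hIcc, Finset.sum_range_sub (avgF g)]
  have hFN : avgF g N = g (fun _ => true) := by
    have h1 : ∀ I : Fin (N - N) → Bool, vecOnes N I = fun _ => true := by
      intro I; funext i; simp [vecOnes, i.isLt]
    simp only [avgF]
    simp only [h1, Finset.sum_const]
    simp [Nat.sub_self]
  have hF0 : avgF g 0 = (∑ I : Fin N → Bool, g I) / 2 ^ N := by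
    have h1 : ∀ I : Fin (N - 0) → Bool, vecOnes 0 I = I := by
      intro I; funext i; simp [vecOnes]
    simp only [avgF, Nat.sub_zero]
    simp only [h1]
  rw [hFN, hF0]
  ring
end

section
/- For an integer N ≥ 1 and a function g : {0,1}^N → ℝ, define for each n ∈ {1,…,N} the sequential bargaining payoff π_n(g) := 2^{-(N-n+1)} · Σ_{I ∈ {0,1}^{N-n}} ( g(1^{n-1}, 1, I) − g(1^{n-1}, 0, I) ), where (1^{n-1}, b, I) denotes the vector whose first n−1 coordinates equal 1, whose n-th coordinate equals b, and whose last N−n coordinates are given by I. For a permutation σ of {1,…,N} let g_σ : {0,1}^N → ℝ be defined by g_σ(I_1,…,I_N) := g(I_{σ(1)},…,I_{σ(N)}). Then Σ_{n=1}^N π_n(g_σ) = Σ_{n=1}^N π_n(g); equivalently, the MNO's payoff g(1,…,1) − Σ_{n=1}^N π_n(g) is invariant under any reordering of the APOs in the bargaining sequence. (Invariance to APO-order changing.) -/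
open Finset

def onesExt {N : ℕ} (k : ℕ) (I : Fin (N - k) → Bool) : Fin N → Bool :=
  fun i => if h : k ≤ i.val then I ⟨i.val - k, by omega⟩ else true

noncomputable def avgOnes {N : ℕ} (g : (Fin N → Bool) → ℝ) (k : ℕ) : ℝ :=
  (∑ I : Fin (N - k) → Bool, g (onesExt k I)) / 2 ^ (N - k)

lemma extendVec_true_eq_onesExt {N : ℕ} (k : ℕ) (I : Fin (N - (k + 1)) → Bool) :
    extendVec (k + 1) true I = onesExt (k + 1) I := by
  funext i
  simp only [extendVec, onesExt, Nat.add_sub_cancel]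
  split_ifs <;> first | rfl | omega

lemma onesExt_cons_eq_extendVec {N k : ℕ} (h : N - k = N - (k + 1) + 1) (b : Bool)
    (I : Fin (N - (k + 1)) → Bool) :
    onesExt k (fun j => Fin.cons (α := fun _ => Bool) b I (finCongr h j))
      = extendVec (k + 1) b I := by
  funext i
  simp only [extendVec, onesExt, Nat.add_sub_cancel]
  by_cases hlt : i.val < k
  · rw [dif_neg (by omega), if_pos hlt]
  by_cases heq : i.val = k
  · have hzero : finCongr h ⟨i.val - k, by omega⟩ = 0 := Fin.ext (by simp; omega)
    rw [dif_pos (by omega), if_neg hlt, if_pos heq, hzero, Fin.cons_zero]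
  · have hsucc : finCongr h ⟨i.val - k, by omega⟩ = Fin.succ ⟨i.val - (k + 1), by omega⟩ :=
      Fin.ext (by simp; omega)
    rw [dif_pos (by omega), if_neg hlt, if_neg heq, dif_pos (by omega), hsucc, Fin.cons_succ]

lemma sum_onesExt_eq_sum_extendVec {M : Type*} [AddCommMonoid M] {N k : ℕ} (hk : k < N)
    (g : (Fin N → Bool) → M) :
    ∑ J : Fin (N - k) → Bool, g (onesExt k J)
      = ∑ I : Fin (N - (k + 1)) → Bool, g (extendVec (k + 1) true I)
        + ∑ I : Fin (N - (k + 1)) → Bool, g (extendVec (k + 1) false I) := by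
  have h : N - k = N - (k + 1) + 1 := by omega
  let e : Bool × (Fin (N - (k + 1)) → Bool) ≃ (Fin (N - k) → Bool) :=
    (Fin.consEquiv fun _ => Bool).trans (Equiv.arrowCongr (finCongr h.symm) (Equiv.refl Bool))
  rw [← Fintype.sum_equiv e (fun p => g (extendVec (k + 1) p.1 p.2)) _
    fun p => congrArg g (onesExt_cons_eq_extendVec h p.1 p.2).symm]
  rw [Fintype.sum_prod_type, Fintype.sum_bool]

lemma seqPayoff_succ_eq_avgOnes_sub {N k : ℕ} (hk : k < N) (g : (Fin N → Bool) → ℝ) :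
    seqPayoff g (k + 1) = avgOnes g (k + 1) - avgOnes g k := by
  have hexp : N - k = N - (k + 1) + 1 := by omega
  simp only [seqPayoff, avgOnes, sum_onesExt_eq_sum_extendVec hk, hexp, sum_sub_distrib,
    extendVec_true_eq_onesExt]
  rw [pow_succ]
  field_simp
  ring

lemma sum_seqPayoff_eq_avgOnes_sub {N : ℕ} (g : (Fin N → Bool) → ℝ) :
    ∑ n ∈ Icc 1 N, seqPayoff g n = avgOnes g N - avgOnes g 0 := by
  rw [← Ico_add_one_right_eq_Icc, sum_Ico_eq_sum_range, Nat.add_sub_cancel, ← sum_range_sub]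
  exact sum_congr rfl fun k hk => by
    rw [add_comm 1 k, seqPayoff_succ_eq_avgOnes_sub (mem_range.mp hk)]

lemma avgOnes_self {N : ℕ} (g : (Fin N → Bool) → ℝ) : avgOnes g N = g fun _ => true := by
  have hones (I : Fin (N - N) → Bool) : onesExt N I = fun _ => true :=
    funext fun i => dif_neg (by omega)
  simp [avgOnes, hones]

lemma avgOnes_zero {N : ℕ} (g : (Fin N → Bool) → ℝ) :
    avgOnes g 0 = (∑ I, g I) / 2 ^ N := by
  have hid (I : Fin (N - 0) → Bool) : onesExt 0 I = I := funext fun i => dif_pos (Nat.zero_le _)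
  simp only [avgOnes, hid, Nat.sub_zero]

lemma sum_comp_perm {ι α M : Type*} [Fintype ι] [DecidableEq ι] [Fintype α] [AddCommMonoid M]
    (g : (ι → α) → M) (σ : Equiv.Perm ι) :
    ∑ I : ι → α, g (fun i => I (σ i)) = ∑ I, g I :=
  Fintype.sum_equiv (Equiv.arrowCongr σ.symm (Equiv.refl α)) _ _ fun _ => rfl

theorem MNO_payoff_order_invariant_general {N : ℕ}
    (g : (Fin N → Bool) → ℝ) (σ : Equiv.Perm (Fin N)) :
    ∑ n ∈ Finset.Icc 1 N, seqPayoff (fun I => g (fun i => I (σ i))) n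
      = ∑ n ∈ Finset.Icc 1 N, seqPayoff g n := by
  rw [sum_seqPayoff_eq_avgOnes_sub, sum_seqPayoff_eq_avgOnes_sub, avgOnes_self, avgOnes_self, avgOnes_zero, avgOnes_zero,
    sum_comp_perm]

/-- Invariance to APO-order changing: the total APO payoff (and hence the
MNO's payoff `g(1,…,1) − Σₙ πₙ(g)`) under the sequential bargaining is invariant
under any reordering `σ` of the APOs, where bargaining in the order
`σ(1),…,σ(N)` corresponds to replacing `g` by `g_σ(I) = g(I ∘ σ)`. -/
theorem MNO_payoff_order_invariant {N : ℕ} (hN : 1 ≤ N)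
    (g : (Fin N → Bool) → ℝ) (σ : Equiv.Perm (Fin N)) :
    ∑ n ∈ Finset.Icc 1 N, seqPayoff (fun I => g (fun i => I (σ i))) n
      = ∑ n ∈ Finset.Icc 1 N, seqPayoff g n :=
  MNO_payoff_order_invariant_general g σ
end

section
/- For an integer N ≥ 1 and a function g : {0,1}^N → ℝ, define for each n ∈ {1,…,N} the sequential bargaining payoff π_n(g) := 2^{-(N-n+1)} · Σ_{I ∈ {0,1}^{N-n}} ( g(1^{n-1}, 1, I) − g(1^{n-1}, 0, I) ), where (1^{n-1}, b, I) denotes the vector whose first n−1 coordinates equal 1, whose n-th coordinate equals b, and whose last N−n coordinates are given by I. Suppose g is submodular, i.e., g(I ∨ J) + g(I ∧ J) ≤ g(I) + g(J) for all I, J ∈ {0,1}^N, where ∨ and ∧ are the coordinatewise maximum and minimum. Then for every n with 1 ≤ n < N, π_n(g) ≥ 2^{-(N-n)} · Σ_{I ∈ {0,1}^{N-n-1}} ( g(1^{n}, 1, I) − g(1^{n-1}, 0, 1, I) ), where the right-hand side is the payoff APO n would obtain if it bargained one position later (with the APO originally at position n+1 having already reached agreement). (Early-mover advantage: an APO obtains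 a weakly higher payoff by bargaining earlier with the MNO.) -/
/-- The agreement vector `(1^{n-1}, b, 1, I)`: first `n−1` coordinates `true`,
`n`-th coordinate `b`, `(n+1)`-th coordinate `true`, last `N−n−1` given by `I`. -/
def extendVecShift {N : ℕ} (n : ℕ) (b : Bool) (I : Fin (N - n - 1) → Bool) :
    Fin N → Bool :=
  fun i =>
    if i.val < n - 1 then true
    else if i.val = n - 1 then b
    else if i.val = n then true
    else if h : i.val - n - 1 < N - n - 1 then I ⟨i.val - n - 1, h⟩ else true

/-- The vector `(1^{n-1}, b, c, J)`. -/
def vec4 {N : ℕ} (n : ℕ) (b c : Bool) (J : Fin (N - n - 1) → Bool) :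
    Fin N → Bool :=
  fun i =>
    if i.val < n - 1 then true
    else if i.val = n - 1 then b
    else if i.val = n then c
    else if h : i.val - n - 1 < N - n - 1 then J ⟨i.val - n - 1, h⟩ else true

/-- Splitting off the first coordinate of a Boolean vector. -/
def splitEquiv (m : ℕ) (hm : 0 < m) : (Fin m → Bool) ≃ Bool × (Fin (m - 1) → Bool) where
  toFun I := (I ⟨0, hm⟩, fun j => I ⟨j.val + 1, by omega⟩)
  invFun p i := if h : i.val = 0 then p.1 else p.2 ⟨i.val - 1, by omega⟩
  left_inv I := by
    funext i
    by_cases h : i.val = 0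
    · simp only [h, dif_pos]
      congr 1
      exact Fin.ext h.symm
    · simp only [h, dif_neg, not_false_iff]
      congr 1
      apply Fin.ext
      simp only [Fin.val_mk]
      omega
  right_inv p := by
    refine Prod.ext (by simp) ?_
    funext j
    simp only
    exact congrArg p.2 (Fin.ext (by simp))

lemma extendVec_split {N : ℕ} (n : ℕ) (hn : 1 ≤ n) (hnN : n < N) (b c : Bool)
    (J : Fin (N - n - 1) → Bool) (hpos : 0 < N - n) :
    extendVec n b ((splitEquiv (N - n) hpos).symm (c, J)) = vec4 n b c J := by
  funext i
  have hi : i.val < N := i.isLt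
  simp only [extendVec, vec4, splitEquiv, Equiv.coe_fn_symm_mk]
  by_cases h1 : i.val < n - 1
  · simp [h1]
  by_cases h2 : i.val = n - 1
  · simp [h1, h2]
  have hge : n ≤ i.val := by omega
  rw [if_neg h1, if_neg h2, if_neg h1, if_neg h2]
  rw [dif_pos (show i.val - n < N - n by omega)]
  by_cases h3 : i.val = n
  · rw [if_pos h3]
    rw [dif_pos (show i.val - n = 0 by omega)]
  · rw [if_neg h3]
    rw [dif_neg (show ¬(i.val - n = 0) by omega)]
    rw [dif_pos (show i.val - n - 1 < N - n - 1 by omega)]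

lemma shift_eq_vec4 {N : ℕ} (n : ℕ) (b : Bool) (J : Fin (N - n - 1) → Bool) :
    extendVecShift n b J = vec4 n b true J := rfl

lemma vec4_or {N : ℕ} (n : ℕ) (hn : 1 ≤ n) (J : Fin (N - n - 1) → Bool) :
    (fun i => vec4 n true false J i || vec4 n false true J i) = vec4 n true true J := by
  funext i
  simp only [vec4]
  split_ifs <;> first | rfl | simp

lemma vec4_and {N : ℕ} (n : ℕ) (hn : 1 ≤ n) (J : Fin (N - n - 1) → Bool) :
    (fun i => vec4 n true false J i && vec4 n false true J i) = vec4 n false false J := by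
  funext i
  simp only [vec4]
  split_ifs <;> first | rfl | simp

/-- Early-mover advantage: if `g` is submodular, then APO `n`'s payoff in
position `n` of the sequential bargaining is at least the payoff it would
obtain one position later (with the APO originally at position `n+1` having
already reached agreement). -/
theorem early_mover_advantage {N : ℕ} (g : (Fin N → Bool) → ℝ)
    (hsub : ∀ I J : Fin N → Bool,
      g (fun i => I i || J i) + g (fun i => I i && J i) ≤ g I + g J) :
    ∀ n : ℕ, 1 ≤ n → n < N →
      (∑ I : Fin (N - n - 1) → Bool,
          (g (extendVecShift n true I) - g (extendVecShift n false I)))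
            / 2 ^ (N - n)
        ≤ seqPayoff g n := by
  intro n hn hnN
  have hpos : 0 < N - n := by omega
  have hsum : (∑ I : Fin (N - n) → Bool,
        (g (extendVec n true I) - g (extendVec n false I)))
      = ∑ J : Fin (N - n - 1) → Bool,
          ((g (vec4 n true true J) - g (vec4 n false true J)) +
           (g (vec4 n true false J) - g (vec4 n false false J))) := by
    rw [← Equiv.sum_comp (splitEquiv (N - n) hpos).symm
      (fun I => g (extendVec n true I) - g (extendVec n false I))]
    rw [Fintype.sum_prod_type, Fintype.sum_bool, ← Finset.sum_add_distrib]
    refine Finset.sum_congr rfl fun J _ => ?_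
    rw [extendVec_split n hn hnN true true J hpos,
        extendVec_split n hn hnN false true J hpos,
        extendVec_split n hn hnN true false J hpos,
        extendVec_split n hn hnN false false J hpos]
  have hterm : ∀ J : Fin (N - n - 1) → Bool,
      g (vec4 n true true J) - g (vec4 n false true J)
        ≤ g (vec4 n true false J) - g (vec4 n false false J) := by
    intro J
    have h := hsub (vec4 n true false J) (vec4 n false true J)
    rw [vec4_or n hn J, vec4_and n hn J] at h
    linarith
  have hkey : 2 * (∑ J : Fin (N - n - 1) → Bool,
        (g (vec4 n true true J) - g (vec4 n false true J)))
      ≤ ∑ J : Fin (N - n - 1) → Bool,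
          ((g (vec4 n true true J) - g (vec4 n false true J)) +
           (g (vec4 n true false J) - g (vec4 n false false J))) := by
    rw [Finset.sum_add_distrib]
    have := Finset.sum_le_sum (fun J (_ : J ∈ Finset.univ) => hterm J)
    linarith
  simp only [shift_eq_vec4]
  rw [seqPayoff, hsum]
  rw [pow_succ]
  rw [div_le_div_iff₀ (by positivity) (by positivity)]
  have h2 : (0:ℝ) < 2 ^ (N - n) := by positivity
  nlinarith [hkey]
end

section
/- For an integer N ≥ 1 and a function g : {0,1}^N → ℝ, define for each n ∈ {1,…,N} the sequential bargaining payoff π_n(g) := 2^{-(N-n+1)} · Σ_{I ∈ {0,1}^{N-n}} ( g(1^{n-1}, 1, I) − g(1^{n-1}, 0, I) ), where (1^{n-1}, b, I) denotes the vector whose first n−1 coordinates equal 1, whose n-th coordinate equals b, and whose last N−n coordinates are given by I. Suppose g(I) = ψ(Σ_{i=1}^N I_i) for a function ψ : {0,1,…,N} → ℝ whose increments are nonincreasing, i.e., ψ(k+1) − ψ(k) ≥ ψ(k+2) − ψ(k+1) for all 0 ≤ k ≤ N−2. Then π_n(g) ≥ π_{n+1}(g) for every 1 ≤ n < N. (Early-mover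 advantage with symmetric APOs: under the sequential bargaining, an APO that bargains earlier obtains a weakly higher payoff.) -/
open Finset

def cnt {k : ℕ} (I : Fin k → Bool) : ℕ :=
  (Finset.univ.filter fun i => I i = true).card

lemma cnt_le {k : ℕ} (I : Fin k → Bool) : cnt I ≤ k := by
  classical
  calc cnt I ≤ (Finset.univ : Finset (Fin k)).card := Finset.card_filter_le _ _
    _ = k := by simp

lemma cnt_eq_sum {k : ℕ} (I : Fin k → Bool) :
    cnt I = ∑ i : Fin k, (if I i = true then 1 else 0) := by
  classical
  simpa [cnt] using Finset.card_filter (fun i => I i = true) Finset.univ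

lemma cnt_cons {k : ℕ} (b : Bool) (J : Fin k → Bool) :
    cnt (Fin.cons b J) = (if b then 1 else 0) + cnt J := by
  rw [cnt_eq_sum, cnt_eq_sum, Fin.sum_univ_succ]
  simp [Fin.cons_zero, Fin.cons_succ]

noncomputable def Tsum (k : ℕ) (f : ℕ → ℝ) : ℝ := ∑ I : Fin k → Bool, f (cnt I)

lemma Tsum_succ (k : ℕ) (f : ℕ → ℝ) :
    Tsum (k + 1) f = Tsum k f + Tsum k (fun c => f (c + 1)) := by
  classical
  unfold Tsum
  rw [← (Fin.consEquiv (fun _ : Fin (k + 1) => Bool)).sum_comp (fun I => f (cnt I)),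
    Fintype.sum_prod_type, Fintype.sum_bool]
  have hc : ∀ (b : Bool) (J : Fin k → Bool),
      cnt ((Fin.consEquiv fun _ : Fin (k + 1) => Bool) (b, J))
        = (if b then 1 else 0) + cnt J := fun b J => cnt_cons b J
  simp only [hc]
  rw [add_comm]
  congr 1 <;> exact Finset.sum_congr rfl fun J _ => by simp [Nat.add_comm]

lemma cnt_extend {N : ℕ} {n : ℕ} (hn : 1 ≤ n) (hN : n ≤ N) (b : Bool)
    (I : Fin (N - n) → Bool) :
    cnt (extendVec n b I) = (n - 1) + (if b then 1 else 0) + cnt I := by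
  classical
  set f : ℕ → ℕ := fun v =>
    if v < n - 1 then 1
    else if v = n - 1 then (if b then 1 else 0)
    else if h : v - n < N - n then (if I ⟨v - n, h⟩ then 1 else 0) else 1 with hf
  have h1 : cnt (extendVec n b I) = ∑ v ∈ Finset.range N, f v := by
    rw [cnt_eq_sum, ← Fin.sum_univ_eq_sum_range f N]
    refine Finset.sum_congr rfl fun i _ => ?_
    simp only [hf, extendVec]
    split_ifs <;> simp_all
  have hN2 : N = n + (N - n) := by omega
  have h2 : ∑ v ∈ Finset.range N, f v
      = (∑ v ∈ Finset.range n, f v) + ∑ j ∈ Finset.range (N - n), f (n + j) := by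
    conv_lhs => rw [hN2]
    exact Finset.sum_range_add f n (N - n)
  have h3 : ∑ v ∈ Finset.range n, f v = (n - 1) + (if b then 1 else 0) := by
    have hsplit : ∑ v ∈ Finset.range n, f v
        = ∑ v ∈ Finset.range (n - 1), f v + f (n - 1) := by
      conv_lhs => rw [show n = n - 1 + 1 from by omega]
      exact Finset.sum_range_succ f (n - 1)
    rw [hsplit]
    have hc : ∀ v ∈ Finset.range (n - 1), f v = 1 := by
      intro v hv
      simp only [hf]
      rw [if_pos (Finset.mem_range.mp hv)]
    rw [Finset.sum_congr rfl hc, Finset.sum_const, smul_eq_mul, mul_one, Finset.card_range]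
    congr 1
    simp [hf]
  have h4 : ∑ j ∈ Finset.range (N - n), f (n + j) = cnt I := by
    set f' : ℕ → ℕ := fun j => if h : j < N - n then (if I ⟨j, h⟩ then 1 else 0) else 0 with hf'
    have e1 : ∑ j ∈ Finset.range (N - n), f (n + j) = ∑ j ∈ Finset.range (N - n), f' j := by
      refine Finset.sum_congr rfl fun j hj => ?_
      have hj' := Finset.mem_range.mp hj
      simp only [hf, hf']
      rw [if_neg (by omega), if_neg (by omega)]
      have hlt : n + j - n < N - n := by omega
      rw [dif_pos hlt, dif_pos hj']
      have hmk : (⟨n + j - n, hlt⟩ : Fin (N - n)) = ⟨j, hj'⟩ := by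
        apply Fin.ext; simp
      rw [hmk]
    rw [e1, ← Fin.sum_univ_eq_sum_range f' (N - n), cnt_eq_sum]
    refine Finset.sum_congr rfl fun i _ => ?_
    simp [hf']
  rw [h1, h2, h3, h4]

lemma seq_eq {N : ℕ} (g : (Fin N → Bool) → ℝ) (ψ : ℕ → ℝ)
    (hg : ∀ I : Fin N → Bool,
      g I = ψ (Finset.univ.filter (fun i => I i = true)).card)
    {n : ℕ} (hn : 1 ≤ n) (hN : n ≤ N) :
    seqPayoff g n = Tsum (N - n) (fun c => ψ (n + c) - ψ (n - 1 + c)) / 2 ^ (N - n + 1) := by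
  unfold seqPayoff Tsum
  congr 1
  refine Finset.sum_congr rfl fun I _ => ?_
  rw [hg, hg]
  have ht := cnt_extend hn hN true I
  have hfa := cnt_extend hn hN false I
  unfold cnt at ht hfa
  norm_num at ht hfa
  rw [ht, hfa, show n - 1 + 1 = n from by omega]
  rfl

/-- Early-mover advantage with symmetric APOs: if the social welfare depends
only on the number of agreements, `g(I) = ψ(#{i : I_i = 1})`, and `ψ` has
nonincreasing increments, then an APO bargaining earlier obtains a weakly
higher payoff: `π_n(g) ≥ π_{n+1}(g)`. -/
theorem early_mover_advantage_symmetric {N : ℕ} (g : (Fin N → Bool) → ℝ)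
    (ψ : ℕ → ℝ)
    (hg : ∀ I : Fin N → Bool,
      g I = ψ (Finset.univ.filter (fun i => I i = true)).card)
    (hψ : ∀ k : ℕ, k + 2 ≤ N → ψ (k + 2) - ψ (k + 1) ≤ ψ (k + 1) - ψ k) :
    ∀ n : ℕ, 1 ≤ n → n < N → seqPayoff g (n + 1) ≤ seqPayoff g n := by
  intro n hn hnN
  have hm1 : N - n = (N - n - 1) + 1 := by omega
  set m := N - n - 1 with hm
  have hm2 : N - (n + 1) = m := by omega
  rw [seq_eq g ψ hg hn (le_of_lt hnN),
    seq_eq g ψ hg (by omega : 1 ≤ n + 1) (by omega : n + 1 ≤ N)]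
  set F : ℕ → ℝ := fun c => ψ (n + c) - ψ (n - 1 + c) with hF
  set G : ℕ → ℝ := fun c => ψ (n + 1 + c) - ψ (n + 1 - 1 + c) with hG
  have hTF : Tsum (N - n) F = Tsum m F + Tsum m (fun c => F (c + 1)) := by
    rw [hm1]; exact Tsum_succ m F
  have hGF : Tsum (N - (n + 1)) G = Tsum m (fun c => F (c + 1)) := by
    rw [hm2]
    refine Finset.sum_congr rfl fun J _ => ?_
    simp only [hF, hG]
    congr 2 <;> omega
  have hle : Tsum m (fun c => F (c + 1)) ≤ Tsum m F := by
    refine Finset.sum_le_sum fun J _ => ?_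
    have hc : cnt J ≤ m := cnt_le J
    have hk := hψ (n - 1 + cnt J) (by omega)
    simp only [hF]
    have e1 : n - 1 + cnt J + 1 = n + cnt J := by omega
    have e2 : n - 1 + cnt J + 2 = n + (cnt J + 1) := by omega
    have e3 : n - 1 + (cnt J + 1) = n + cnt J := by omega
    rw [e1, e2] at hk
    rw [e3]
    exact hk
  rw [hTF, hGF]
  rw [show N - (n + 1) + 1 = m + 1 from by omega, show N - n + 1 = m + 2 from by omega]
  rw [div_le_div_iff₀ (by positivity) (by positivity)]
  rw [pow_succ (2 : ℝ) (m + 1)]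
  nlinarith [pow_pos (show (0:ℝ) < 2 by norm_num) (m + 1)]
end

section
/- Let 0 < ξ̄, let f : ℝ → ℝ be continuous with f > 0 on (0, ξ̄), f ≥ 0 and ∫_0^{ξ̄} f(ξ) dξ = 1, let F(t) := ∫_0^t f(ξ) dξ, and define G(t) := ∫_0^t ξ f(ξ) dξ + t ∫_t^{ξ̄} f(ξ) dξ for t ∈ [0, ξ̄]. Fix reals 0 ≤ c < w, a resource B with 0 < B ≤ ξ̄, a price p ∈ ℝ, and define the APO's payoff V(x) := (w − c)·( G(B − x) − G(B) ) + (p − c)·x for x ∈ [0, B], and the critical price c̃ := c + (w − c)·(1 − F(B)). Then: (i) if p < c̃, then x = 0 is the unique maximizer of V on [0, B]; (ii) if c̃ ≤ p ≤ w, then x* := B − t* maximizes V on [0, B], where t* is the unique t ∈ [0, ξ̄] with F(t) = (w − p)/(w − c); (iii) if p > w, then x = B is the unique maximizer of V on [0, B]. (APO's optimal decision in the Stackelberg game: the amount of resource the APO dedicates to offloading given the MNO's linear price p.) -/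
/-!
Since `G' = 1 - F`, the marginal payoff is `V'(x) = (p - c) - (w - c)(1 - F(B - x))`, which
decreases in `x` because `F` is increasing; so `V` is concave on `[0, B]`. Its sign at the ends
decides the extreme cases: `V'(0) < 0` exactly when `p < c̃`, and `V' ≥ p - w` everywhere on
`[0, B]`. In between, `V'` vanishes at `B - t*`, which is therefore a maximizer.
-/

open intervalIntegral Set

/-- The cumulative distribution function `F(t) = ∫_0^t f`. -/
noncomputable def Ffun (f : ℝ → ℝ) (t : ℝ) : ℝ := ∫ ξ in (0 : ℝ)..t, f ξ

/-- The expected served own demand `G(t) = ∫_0^t ξ f(ξ) dξ + t ∫_t^{ξ̄} f`. -/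
noncomputable def Gfun (ξmax : ℝ) (f : ℝ → ℝ) (t : ℝ) : ℝ :=
  (∫ ξ in (0 : ℝ)..t, ξ * f ξ) + t * ∫ ξ in t..ξmax, f ξ

/-- The APO's payoff from dedicating `x` units of resource to offloading at
unit price `p`: `V(x) = (w − c)(G(B − x) − G(B)) + (p − c)x`. -/
noncomputable def Vfun (ξmax : ℝ) (f : ℝ → ℝ) (w c B p x : ℝ) : ℝ :=
  (w - c) * (Gfun ξmax f (B - x) - Gfun ξmax f B) + (p - c) * x

lemma isMaxOn_Icc_of_hasDerivAt_of_antitoneOn {φ φ' : ℝ → ℝ} {a b x₀ : ℝ}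
    (hφ : ∀ x, HasDerivAt φ (φ' x) x) (hanti : AntitoneOn φ' (Icc a b))
    (hx₀ : x₀ ∈ Icc a b) (hcrit : φ' x₀ = 0) : IsMaxOn φ (Icc a b) x₀ := by
  have hcont : Continuous φ := continuous_iff_continuousAt.2 fun x => (hφ x).continuousAt
  have hdiff : ∀ s, DifferentiableOn ℝ φ s := fun _ x _ =>
    (hφ x).differentiableAt.differentiableWithinAt
  have hmono : MonotoneOn φ (Icc a x₀) :=
    monotoneOn_of_deriv_nonneg (convex_Icc _ _) hcont.continuousOn (hdiff _) fun x hx => by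
      rw [interior_Icc] at hx
      rw [(hφ x).deriv, ← hcrit]
      exact hanti ⟨hx.1.le, hx.2.le.trans hx₀.2⟩ hx₀ hx.2.le
  have hanti' : AntitoneOn φ (Icc x₀ b) :=
    antitoneOn_of_deriv_nonpos (convex_Icc _ _) hcont.continuousOn (hdiff _) fun x hx => by
      rw [interior_Icc] at hx
      rw [(hφ x).deriv, ← hcrit]
      exact hanti hx₀ ⟨hx₀.1.trans hx.1.le, hx.2.le⟩ hx.1.le
  intro x hx
  rcases le_total x x₀ with hle | hle
  · exact hmono ⟨hx.1, hle⟩ ⟨hx₀.1, le_rfl⟩ hle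
  · exact hanti' ⟨le_rfl, hx₀.2⟩ ⟨hle, hx.2⟩ hle

lemma Ffun_hasDerivAt {f : ℝ → ℝ} (hfc : Continuous f) (t : ℝ) :
    HasDerivAt (Ffun f) (f t) t :=
  integral_hasDerivAt_right (hfc.intervalIntegrable _ _)
    (hfc.stronglyMeasurableAtFilter _ _) hfc.continuousAt

lemma Ffun_continuous {f : ℝ → ℝ} (hfc : Continuous f) : Continuous (Ffun f) :=
  continuous_iff_continuousAt.2 fun t => (Ffun_hasDerivAt hfc t).continuousAt

lemma Ffun_zero (f : ℝ → ℝ) : Ffun f 0 = 0 := integral_same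

lemma Ffun_sub_Ffun {f : ℝ → ℝ} (hfc : Continuous f) (a b : ℝ) :
    Ffun f b - Ffun f a = ∫ ξ in a..b, f ξ :=
  integral_interval_sub_left (hfc.intervalIntegrable _ _) (hfc.intervalIntegrable _ _)

lemma Ffun_strictMonoOn {f : ℝ → ℝ} (hfc : Continuous f) {a b : ℝ}
    (hfpos : ∀ ξ ∈ Ioo a b, 0 < f ξ) : StrictMonoOn (Ffun f) (Icc a b) := by
  intro s hs t ht hst
  have hpos : 0 < ∫ ξ in s..t, f ξ :=
    intervalIntegral_pos_of_pos_on (hfc.intervalIntegrable s t)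
      (fun ξ hξ => hfpos ξ ⟨hs.1.trans_lt hξ.1, hξ.2.trans_le ht.2⟩) hst
  linarith [Ffun_sub_Ffun hfc s t]

lemma Gfun_hasDerivAt (ξmax : ℝ) {f : ℝ → ℝ} (hfc : Continuous f) (t : ℝ) :
    HasDerivAt (Gfun ξmax f) (Ffun f ξmax - Ffun f t) t := by
  have hidf : Continuous fun ξ : ℝ => ξ * f ξ := continuous_id.mul hfc
  have hmean : HasDerivAt (fun u => ∫ ξ in (0 : ℝ)..u, ξ * f ξ) (t * f t) t :=
    integral_hasDerivAt_right (hidf.intervalIntegrable _ _)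
      (hidf.stronglyMeasurableAtFilter _ _) hidf.continuousAt
  have htail : HasDerivAt (fun u => ∫ ξ in u..ξmax, f ξ) (-f t) t :=
    integral_hasDerivAt_left (hfc.intervalIntegrable _ _)
      (hfc.stronglyMeasurableAtFilter _ _) hfc.continuousAt
  refine (hmean.add ((hasDerivAt_id' t).mul htail)).congr_deriv ?_
  rw [Ffun_sub_Ffun hfc t ξmax]
  ring

lemma Vfun_hasDerivAt (ξmax : ℝ) {f : ℝ → ℝ} (hfc : Continuous f)
    (hnorm : Ffun f ξmax = 1) (w c B p x : ℝ) :
    HasDerivAt (Vfun ξmax f w c B p) ((p - c) - (w - c) * (1 - Ffun f (B - x))) x := by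
  have hG := (Gfun_hasDerivAt ξmax hfc (B - x)).comp x ((hasDerivAt_id' x).const_sub B)
  refine (((hG.sub_const (Gfun ξmax f B)).const_mul (w - c)).add
    ((hasDerivAt_id' x).const_mul (p - c))).congr_deriv ?_
  rw [hnorm]
  ring

lemma Ffun_sub_mem_Icc {ξmax : ℝ} {f : ℝ → ℝ} (hfc : Continuous f)
    (hfpos : ∀ ξ ∈ Ioo 0 ξmax, 0 < f ξ) {B u : ℝ} (hBξ : B ≤ ξmax) (hu : u ∈ Icc 0 B) :
    Ffun f (B - u) ∈ Icc 0 (Ffun f B) := by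
  obtain ⟨hu0, huB⟩ := hu
  have hmono := (Ffun_strictMonoOn hfc hfpos).monotoneOn
  have hBu : B - u ∈ Icc 0 ξmax := ⟨by linarith, by linarith⟩
  exact ⟨Ffun_zero f ▸ hmono ⟨le_rfl, by linarith⟩ hBu hBu.1,
    hmono hBu ⟨by linarith, hBξ⟩ (by linarith)⟩

lemma Vfun_strictAntiOn {ξmax : ℝ} {f : ℝ → ℝ} (hfc : Continuous f)
    (hfpos : ∀ ξ ∈ Ioo 0 ξmax, 0 < f ξ) (hnorm : Ffun f ξmax = 1) {c w B p : ℝ}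
    (hcw : c ≤ w) (hBξ : B ≤ ξmax) (hp : p < c + (w - c) * (1 - Ffun f B)) :
    StrictAntiOn (Vfun ξmax f w c B p) (Icc 0 B) := by
  have hV := Vfun_hasDerivAt ξmax hfc hnorm w c B p
  refine strictAntiOn_of_deriv_neg (convex_Icc 0 B)
    (fun x _ => (hV x).continuousAt.continuousWithinAt) fun x hx => ?_
  rw [interior_Icc] at hx
  have hF := (Ffun_sub_mem_Icc hfc hfpos hBξ (Ioo_subset_Icc_self hx)).2
  rw [(hV x).deriv]
  nlinarith

lemma Vfun_strictMonoOn {ξmax : ℝ} {f : ℝ → ℝ} (hfc : Continuous f)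
    (hfpos : ∀ ξ ∈ Ioo 0 ξmax, 0 < f ξ) (hnorm : Ffun f ξmax = 1) {c w B p : ℝ}
    (hcw : c ≤ w) (hBξ : B ≤ ξmax) (hp : w < p) :
    StrictMonoOn (Vfun ξmax f w c B p) (Icc 0 B) := by
  have hV := Vfun_hasDerivAt ξmax hfc hnorm w c B p
  refine strictMonoOn_of_deriv_pos (convex_Icc 0 B)
    (fun x _ => (hV x).continuousAt.continuousWithinAt) fun x hx => ?_
  rw [interior_Icc] at hx
  have hF := (Ffun_sub_mem_Icc hfc hfpos hBξ (Ioo_subset_Icc_self hx)).1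
  rw [(hV x).deriv]
  nlinarith

lemma Vfun_isMaxOn {ξmax : ℝ} {f : ℝ → ℝ} (hfc : Continuous f)
    (hfpos : ∀ ξ ∈ Ioo 0 ξmax, 0 < f ξ) (hnorm : Ffun f ξmax = 1) {c w B p t : ℝ}
    (hcw : c < w) (hBξ : B ≤ ξmax) (ht : t ∈ Icc 0 B) (hFt : Ffun f t = (w - p) / (w - c)) :
    IsMaxOn (Vfun ξmax f w c B p) (Icc 0 B) (B - t) := by
  have hmono := (Ffun_strictMonoOn hfc hfpos).monotoneOn
  have hmem : ∀ x ∈ Icc 0 B, B - x ∈ Icc 0 ξmax := fun x hx =>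
    ⟨by linarith [hx.2], by linarith [hx.1]⟩
  refine isMaxOn_Icc_of_hasDerivAt_of_antitoneOn (Vfun_hasDerivAt ξmax hfc hnorm w c B p)
    (fun x hx y hy hxy => ?_) ⟨by linarith [ht.2], by linarith [ht.1]⟩ ?_
  · have hF := hmono (hmem y hy) (hmem x hx) (by linarith)
    nlinarith
  · rw [sub_sub_cancel, hFt]
    field_simp [(sub_pos.2 hcw).ne']
    ring

theorem APO_optimal_decision_general (ξmax : ℝ)
    (f : ℝ → ℝ) (hfc : Continuous f)
    (hfpos : ∀ ξ ∈ Set.Ioo (0 : ℝ) ξmax, 0 < f ξ)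
    (hnorm : (∫ ξ in (0 : ℝ)..ξmax, f ξ) = 1)
    (c w : ℝ) (hcw : c < w)
    (B : ℝ) (hB0 : 0 < B) (hBξ : B ≤ ξmax) (p : ℝ) :
    (p < c + (w - c) * (1 - Ffun f B) →
      ∀ x ∈ Set.Icc (0 : ℝ) B, x ≠ 0 →
        Vfun ξmax f w c B p x < Vfun ξmax f w c B p 0) ∧
    (c + (w - c) * (1 - Ffun f B) ≤ p → p ≤ w →
      ∃ tstar ∈ Set.Icc (0 : ℝ) ξmax,
        Ffun f tstar = (w - p) / (w - c) ∧
        (∀ t ∈ Set.Icc (0 : ℝ) ξmax, Ffun f t = (w - p) / (w - c) → t = tstar) ∧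
        ∀ x ∈ Set.Icc (0 : ℝ) B,
          Vfun ξmax f w c B p x ≤ Vfun ξmax f w c B p (B - tstar)) ∧
    (w < p →
      ∀ x ∈ Set.Icc (0 : ℝ) B, x ≠ B →
        Vfun ξmax f w c B p x < Vfun ξmax f w c B p B) := by
  have hwc : 0 < w - c := sub_pos.2 hcw
  refine ⟨fun hp x hx hx0 => ?_, fun hp hpw => ?_, fun hp x hx hxB => ?_⟩
  · exact Vfun_strictAntiOn hfc hfpos hnorm hcw.le hBξ hp ⟨le_rfl, hB0.le⟩ hx
      (hx.1.lt_of_ne' hx0)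
  · have hr : (w - p) / (w - c) ∈ Icc (Ffun f 0) (Ffun f B) := by
      rw [Ffun_zero, mem_Icc, div_le_iff₀ hwc]
      exact ⟨div_nonneg (by linarith) hwc.le, by linarith⟩
    obtain ⟨t, ht, hFt⟩ :=
      intermediate_value_Icc hB0.le (Ffun_continuous hfc).continuousOn hr
    have ht' : t ∈ Icc 0 ξmax := ⟨ht.1, ht.2.trans hBξ⟩
    exact ⟨t, ht', hFt, fun s hs hFs => (Ffun_strictMonoOn hfc hfpos).injOn hs ht'
      (hFs.trans hFt.symm), Vfun_isMaxOn hfc hfpos hnorm hcw hBξ ht hFt⟩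
  · exact Vfun_strictMonoOn hfc hfpos hnorm hcw.le hBξ hp hx ⟨hB0.le, le_rfl⟩
      (hx.2.lt_of_ne hxB)

/-- The APO's optimal decision in the Stackelberg game, with critical price
`c̃ = c + (w − c)(1 − F(B))`: (i) if `p < c̃` the unique maximizer of `V` on
`[0, B]` is `0`; (ii) if `c̃ ≤ p ≤ w` then `B − t*` maximizes `V`, where `t*` is
the unique `t ∈ [0, ξ̄]` with `F(t) = (w − p)/(w − c)`; (iii) if `p > w` the
unique maximizer is `B`. -/
theorem APO_optimal_decision (ξmax : ℝ) (hξ : 0 < ξmax)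
    (f : ℝ → ℝ) (hfc : Continuous f)
    (hfpos : ∀ ξ ∈ Set.Ioo (0 : ℝ) ξmax, 0 < f ξ)
    (hfnn : ∀ ξ : ℝ, 0 ≤ f ξ)
    (hnorm : (∫ ξ in (0 : ℝ)..ξmax, f ξ) = 1)
    (c w : ℝ) (hc : 0 ≤ c) (hcw : c < w)
    (B : ℝ) (hB0 : 0 < B) (hBξ : B ≤ ξmax) (p : ℝ) :
    (p < c + (w - c) * (1 - Ffun f B) →
      ∀ x ∈ Set.Icc (0 : ℝ) B, x ≠ 0 →
        Vfun ξmax f w c B p x < Vfun ξmax f w c B p 0) ∧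
    (c + (w - c) * (1 - Ffun f B) ≤ p → p ≤ w →
      ∃ tstar ∈ Set.Icc (0 : ℝ) ξmax,
        Ffun f tstar = (w - p) / (w - c) ∧
        (∀ t ∈ Set.Icc (0 : ℝ) ξmax, Ffun f t = (w - p) / (w - c) → t = tstar) ∧
        ∀ x ∈ Set.Icc (0 : ℝ) B,
          Vfun ξmax f w c B p x ≤ Vfun ξmax f w c B p (B - tstar)) ∧
    (w < p →
      ∀ x ∈ Set.Icc (0 : ℝ) B, x ≠ B →
        Vfun ξmax f w c B p x < Vfun ξmax f w c B p B) :=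
  APO_optimal_decision_general ξmax f hfc hfpos hnorm c w hcw B hB0 hBξ p
end
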